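/- arXiv:2503.01652 — 3 statements merged into one kernel-verified Lean document; each statement's English description precedes it below -/
import Mathlib

section
/- Fix n ≥ 1 and pairwise distinct real numbers a_1, b_1, …, a_n, b_n, and set g(X) = ∏_{i=1}^n (X − a_i)(X − b_i). Let W be an n-dimensional ℝ-vector subspace of the space of real polynomials of degree at most 2n − 2 such that every f ∈ W satisfies g′(b_i)·f(a_i) + g′(a_i)·f(b_i) = 0 for all i = 1, …, n. Then there exists a unique f ∈ W with f(a_i) = g′(a_i) for all i = 1, …, n, and this f moreover satisfies f(b_i) = −g′(b_i) for all i. -/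
/-!
The linear map `f ↦ (f(a_i))_i` from `W` to `ℝⁿ` is injective: if `f ∈ W` vanishes at every
`a_i`, the residue relation `g'(b_i) f(a_i) + g'(a_i) f(b_i) = 0` together with `g'(a_i) ≠ 0`
(the roots of `g` are simple) forces `f(b_i) = 0` as well, so `f` has `2n` roots but degree at
most `2n - 2`. As `dim W = n`, this map is bijective, which gives existence and uniqueness; the
residue relation at `f(a_i) = g'(a_i)` then reads `f(b_i) = -g'(b_i)`.
-/

open Polynomial Finset

theorem Lagrange.eval_derivative_nodal_ne_zero {F ι : Type*} [Field F] {s : Finset ι}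
    {v : ι → F} (hvs : Set.InjOn v s) {i : ι} (hi : i ∈ s) :
    (derivative (nodal s v)).eval (v i) ≠ 0 := by
  classical
  have := nodalWeight_ne_zero hvs hi
  rwa [nodalWeight_eq_eval_derivative_nodal hi, ne_eq, inv_eq_zero] at this

theorem prod_X_sub_C_mul_X_sub_C_eq_nodal {R ι : Type*} [CommRing R] [Fintype ι]
    (a b : ι → R) :
    ∏ i, (X - C (a i)) * (X - C (b i)) = Lagrange.nodal univ (Sum.elim a b) := by
  simp [Lagrange.nodal, Fintype.prod_sum_type, prod_mul_distrib]

theorem Submodule.existsUnique_mem_forall_eval_eq {K ι : Type*} [Field K] [Fintype ι]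
    (W : Submodule K K[X]) (x : ι → K) (hdim : Module.finrank K W = Fintype.card ι)
    (hzero : ∀ f ∈ W, (∀ i, f.eval (x i) = 0) → f = 0) (y : ι → K) :
    ∃! f, f ∈ W ∧ ∀ i, f.eval (x i) = y i := by
  let E : W →ₗ[K] ι → K := LinearMap.pi fun i => (leval (x i)).comp W.subtype
  have hE : Function.Injective E := by
    refine (injective_iff_map_eq_zero E).mpr fun f hf => Subtype.ext ?_
    exact hzero f f.2 fun i => congrFun hf i
  have : FiniteDimensional K W := Module.Finite.of_injective E hE
  have hEbij : Function.Bijective E :=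
    ⟨hE, (LinearMap.injective_iff_surjective_of_finrank_eq_finrank
      (by simp [hdim])).mp hE⟩
  obtain ⟨f, hf, hfuniq⟩ := hEbij.existsUnique y
  refine ⟨f, ⟨f.2, fun i => congrFun hf i⟩, fun f' ⟨hf'W, hf'⟩ => ?_⟩
  exact congrArg Subtype.val (hfuniq ⟨f', hf'W⟩ (funext hf'))

theorem stmt2 (n : ℕ) (hn : 1 ≤ n) (a b : Fin n → ℝ)
    (hdist : Function.Injective (Sum.elim a b))
    (W : Submodule ℝ (Polynomial ℝ))
    (hWdim : Module.finrank ℝ ↥W = n)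
    (hWdeg : W ≤ Polynomial.degreeLE ℝ ((2 * n - 2 : ℕ) : WithBot ℕ))
    (g : Polynomial ℝ) (hg : g = ∏ i : Fin n, (X - C (a i)) * (X - C (b i)))
    (hres : ∀ f ∈ W, ∀ i : Fin n,
      (derivative g).eval (b i) * f.eval (a i) + (derivative g).eval (a i) * f.eval (b i) = 0) :
    (∃! f : Polynomial ℝ, f ∈ W ∧ ∀ i : Fin n, f.eval (a i) = (derivative g).eval (a i)) ∧
    (∀ f ∈ W, (∀ i : Fin n, f.eval (a i) = (derivative g).eval (a i)) →
      ∀ i : Fin n, f.eval (b i) = -(derivative g).eval (b i)) := by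
  have hga : ∀ i, (derivative g).eval (a i) ≠ 0 := fun i => by
    rw [hg, prod_X_sub_C_mul_X_sub_C_eq_nodal]
    exact Lagrange.eval_derivative_nodal_ne_zero hdist.injOn (mem_univ (.inl i))
  have hb : ∀ f ∈ W, ∀ i, f.eval (b i) =
      -((derivative g).eval (b i) / (derivative g).eval (a i)) * f.eval (a i) := by
    intro f hf i
    field_simp [hga i]
    linear_combination hres f hf i
  have hzero : ∀ f ∈ W, (∀ i, f.eval (a i) = 0) → f = 0 := by
    intro f hf ha
    refine eq_zero_of_natDegree_lt_card_of_eval_eq_zero f hdist ?_ ?_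
    · rintro (i | i)
      · exact ha i
      · simp [hb f hf i, ha i]
    · have := natDegree_le_iff_degree_le.mpr (mem_degreeLE.mp (hWdeg hf))
      simp only [Fintype.card_sum, Fintype.card_fin]
      omega
  refine ⟨W.existsUnique_mem_forall_eval_eq a (by simpa) hzero _, fun f hf ha i => ?_⟩
  rw [hb f hf i, ha i]
  field_simp [hga i]
end

section
/- Fix n ≥ 1 and pairwise distinct real numbers a_1, b_1, …, a_n, b_n, set g(X) = ∏_{i=1}^n (X − a_i)(X − b_i) and g_i(X) = ∏_{j≠i} (X − a_j)(X − b_j) for i = 1, …, n. A polynomial f ∈ ℝ[X] of degree at most 2n − 2 lies in the linear span of g_1, …, g_n if and only if g′(b_i)·f(a_i) + g′(a_i)·f(b_i) = 0 for all i = 1, …, n. -/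
/-!
Write `g_i = ∏_{j ≠ i} (X - a_j)(X - b_j)`. At the roots `a_i, b_i` of the `i`-th factor every
`g_j` with `j ≠ i` vanishes, and `g'` equals `±(a_i - b_i) g_i`. Hence `f = ∑ c_j g_j` gives
`f(a_i) = c_i g_i(a_i)` and `f(b_i) = c_i g_i(b_i)`, which makes the two terms of the condition
cancel. Conversely, the condition says that `f(a_i) / g_i(a_i) = f(b_i) / g_i(b_i)`; calling this
common value `c_i`, the polynomial `f - ∑ c_j g_j` has degree `< 2n` and vanishes at the `2n`
distinct points `a_i, b_i`, so it is zero.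
-/

open Polynomial Finset

section ProdErase

variable {R ι : Type*} [CommSemiring R] [Fintype ι] [DecidableEq ι] (p : ι → R[X])

theorem eval_prod_erase_eq_zero_of_isRoot {i j : ι} (hji : j ≠ i) {x : R}
    (hx : (p j).IsRoot x) : (∏ k ∈ univ.erase i, p k).eval x = 0 := by
  rw [eval_prod]
  exact prod_eq_zero (mem_erase.2 ⟨hji, mem_univ j⟩) hx

theorem eval_sum_smul_prod_erase_of_isRoot (c : ι → R) {i : ι} {x : R} (hx : (p i).IsRoot x) :
    (∑ j, c j • ∏ k ∈ univ.erase j, p k).eval x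
      = c i * (∏ k ∈ univ.erase i, p k).eval x := by
  rw [eval_finsetSum, sum_eq_single_of_mem i (mem_univ i), eval_smul, smul_eq_mul]
  intro j _ hji
  rw [eval_smul, eval_prod_erase_eq_zero_of_isRoot p (Ne.symm hji) hx, smul_zero]

theorem eval_derivative_prod_of_isRoot {i : ι} {x : R} (hx : (p i).IsRoot x) :
    (derivative (∏ k, p k)).eval x
      = (derivative (p i)).eval x * (∏ k ∈ univ.erase i, p k).eval x := by
  rw [← mul_prod_erase univ p (mem_univ i), derivative_mul, eval_add, eval_mul, eval_mul,
    hx.eq_zero, zero_mul, add_zero]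

theorem eval_prod_erase_ne_zero [IsDomain R] {i : ι} {x : R}
    (hx : ∀ j ≠ i, (p j).eval x ≠ 0) :
    (∏ k ∈ univ.erase i, p k).eval x ≠ 0 := by
  rw [eval_prod]
  exact prod_ne_zero_iff.2 fun j hj => hx j (ne_of_mem_erase hj)

theorem natDegree_prod_erase_le {d : ℕ} (hp : ∀ j, (p j).natDegree ≤ d) (i : ι) :
    (∏ k ∈ univ.erase i, p k).natDegree ≤ (Fintype.card ι - 1) * d := by
  refine (natDegree_prod_le _ _).trans ((sum_le_card_nsmul _ _ d fun j _ => hp j).trans ?_)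
  rw [card_erase_of_mem (mem_univ i), card_univ, smul_eq_mul]

end ProdErase

section CommRing

variable {R ι : Type*} [CommRing R] [Fintype ι] [DecidableEq ι] (a b : ι → R)

theorem eval_derivative_prod_pair_left (i : ι) :
    (derivative (∏ k, (X - C (a k)) * (X - C (b k)))).eval (a i)
      = (a i - b i) * (∏ k ∈ univ.erase i, (X - C (a k)) * (X - C (b k))).eval (a i) := by
  rw [eval_derivative_prod_of_isRoot (fun k => (X - C (a k)) * (X - C (b k))) (i := i) (by simp)]
  simp

theorem eval_derivative_prod_pair_right (i : ι) :
    (derivative (∏ k, (X - C (a k)) * (X - C (b k)))).eval (b i)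
      = (b i - a i) * (∏ k ∈ univ.erase i, (X - C (a k)) * (X - C (b k))).eval (b i) := by
  rw [eval_derivative_prod_of_isRoot (fun k => (X - C (a k)) * (X - C (b k))) (i := i) (by simp)]
  simp

theorem eval_derivative_prod_pair_mul_add_eq_zero_of_mem_span {f : R[X]}
    (hf : f ∈ Submodule.span R
      (Set.range fun i => ∏ k ∈ univ.erase i, (X - C (a k)) * (X - C (b k))))
    (i : ι) :
    (derivative (∏ k, (X - C (a k)) * (X - C (b k)))).eval (b i) * f.eval (a i)
      + (derivative (∏ k, (X - C (a k)) * (X - C (b k)))).eval (a i) * f.eval (b i) = 0 := by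
  obtain ⟨c, rfl⟩ := (Submodule.mem_span_range_iff_exists_fun R).1 hf
  have hsum {x : R} (hx : ((X - C (a i)) * (X - C (b i))).IsRoot x) :=
    eval_sum_smul_prod_erase_of_isRoot (fun k => (X - C (a k)) * (X - C (b k))) c hx
  rw [eval_derivative_prod_pair_left, eval_derivative_prod_pair_right, hsum (by simp),
    hsum (by simp)]
  ring

theorem eval_prod_erase_pair_left_ne_zero [IsDomain R]
    (hab : Function.Injective (Sum.elim a b)) (i : ι) :
    (∏ k ∈ univ.erase i, (X - C (a k)) * (X - C (b k))).eval (a i) ≠ 0 := by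
  refine eval_prod_erase_ne_zero _ fun j hji => ?_
  simp only [eval_mul, eval_sub, eval_X, eval_C]
  have haa : a i ≠ a j := hab.ne (a₁ := .inl i) (a₂ := .inl j) (by simpa using hji.symm)
  have hab' : a i ≠ b j := hab.ne (a₁ := .inl i) (a₂ := .inr j) Sum.inl_ne_inr
  exact mul_ne_zero (sub_ne_zero.2 haa) (sub_ne_zero.2 hab')

theorem eval_derivative_prod_pair_mul_add_eq_zero_iff [IsDomain R] {i : ι} (hi : a i ≠ b i)
    (f : R[X]) :
    (derivative (∏ k, (X - C (a k)) * (X - C (b k)))).eval (b i) * f.eval (a i)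
      + (derivative (∏ k, (X - C (a k)) * (X - C (b k)))).eval (a i) * f.eval (b i) = 0 ↔
    (∏ k ∈ univ.erase i, (X - C (a k)) * (X - C (b k))).eval (b i) * f.eval (a i)
      = (∏ k ∈ univ.erase i, (X - C (a k)) * (X - C (b k))).eval (a i) * f.eval (b i) := by
  rw [eval_derivative_prod_pair_left, eval_derivative_prod_pair_right]
  constructor
  · intro h
    refine mul_left_cancel₀ (sub_ne_zero.2 hi.symm) ?_
    linear_combination h
  · intro h
    linear_combination (b i - a i) * h

end CommRing

section Field

variable {K ι : Type*} [Field K] [Fintype ι] [DecidableEq ι] (a b : ι → K)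

theorem mem_span_of_eval_derivative_prod_pair_mul_add_eq_zero
    (hab : Function.Injective (Sum.elim a b)) {f : K[X]}
    (hf : f.natDegree < 2 * Fintype.card ι)
    (h : ∀ i, (derivative (∏ k, (X - C (a k)) * (X - C (b k)))).eval (b i) * f.eval (a i)
      + (derivative (∏ k, (X - C (a k)) * (X - C (b k)))).eval (a i) * f.eval (b i) = 0) :
    f ∈ Submodule.span K
      (Set.range fun i => ∏ k ∈ univ.erase i, (X - C (a k)) * (X - C (b k))) := by
  set p : ι → K[X] := fun k => (X - C (a k)) * (X - C (b k))
  have hga := eval_prod_erase_pair_left_ne_zero a b hab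
  have hgab (i : ι) := (eval_derivative_prod_pair_mul_add_eq_zero_iff a b
    (hab.ne (a₁ := .inl i) (a₂ := .inr i) Sum.inl_ne_inr) f).1 (h i)
  set c : ι → K := fun i => f.eval (a i) / (∏ k ∈ univ.erase i, p k).eval (a i)
  suffices f - ∑ i, c i • ∏ k ∈ univ.erase i, p k = 0 from
    (Submodule.mem_span_range_iff_exists_fun K).2 ⟨c, (sub_eq_zero.1 this).symm⟩
  refine eq_zero_of_natDegree_lt_card_of_eval_eq_zero _ hab ?_ ?_
  · rintro (i | i)
    · rw [Sum.elim_inl, eval_sub, eval_sum_smul_prod_erase_of_isRoot p c (i := i) (by simp [p])]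
      exact sub_eq_zero.2 (div_mul_cancel₀ _ (hga i)).symm
    · rw [Sum.elim_inr, eval_sub, eval_sum_smul_prod_erase_of_isRoot p c (i := i) (by simp [p]),
        div_mul_eq_mul_div, mul_comm, hgab, mul_div_cancel_left₀ _ (hga i), sub_self]
  · have hdeg (i : ι) : (∏ k ∈ univ.erase i, p k).natDegree ≤ 2 * Fintype.card ι - 1 :=
      (natDegree_prod_erase_le p (fun j => natDegree_mul_le.trans (by
        rw [natDegree_X_sub_C, natDegree_X_sub_C])) i).trans (by omega)
    rw [Fintype.card_sum]
    refine (natDegree_sub_le _ _).trans_lt (max_lt (by omega) ?_)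
    exact (natDegree_sum_le_of_forall_le _ _ fun i _ =>
      (natDegree_smul_le _ _).trans (hdeg i)).trans_lt (by omega)

end Field

theorem stmt3 (n : ℕ) (hn : 1 ≤ n) (a b : Fin n → ℝ)
    (hdist : Function.Injective (Sum.elim a b))
    (g : Polynomial ℝ) (hg : g = ∏ i : Fin n, (X - C (a i)) * (X - C (b i)))
    (gi : Fin n → Polynomial ℝ)
    (hgi : ∀ i : Fin n, gi i = ∏ j ∈ Finset.univ.erase i, (X - C (a j)) * (X - C (b j)))
    (f : Polynomial ℝ) (hf : f.degree ≤ ((2 * n - 2 : ℕ) : WithBot ℕ)) :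
    f ∈ Submodule.span ℝ (Set.range gi) ↔
      ∀ i : Fin n,
        (derivative g).eval (b i) * f.eval (a i) + (derivative g).eval (a i) * f.eval (b i) = 0 := by
  obtain rfl : gi = fun i => ∏ j ∈ univ.erase i, (X - C (a j)) * (X - C (b j)) := funext hgi
  subst hg
  refine ⟨eval_derivative_prod_pair_mul_add_eq_zero_of_mem_span a b,
    mem_span_of_eval_derivative_prod_pair_mul_add_eq_zero a b hdist ?_⟩
  rw [Fintype.card_fin]
  have := natDegree_le_iff_degree_le.2 hf
  omega
end

section
/- In ℝ^6 with coordinates (x_{12}, x_{13}, x_{23}, x_{14}, x_{24}, x_{34}), the vector space of linear functionals b that vanish at the seven vectors e_{13}, e_{14}, e_{12} − e_{23}, 2e_{12} − e_{24}, 2e_{23} − e_{24}, 2e_{23} − e_{34}, and e_{24} − e_{34} is exactly one-dimensional, spanned by the functional b(x) = x_{12} + x_{23} + 2x_{24} + 2x_{34}. -/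
open Finset

/-- Standard basis vectors of `ℝ^6`, coordinates ordered as
`(x₁₂, x₁₃, x₂₃, x₁₄, x₂₄, x₃₄)`. -/
noncomputable def e (i : Fin 6) : Fin 6 → ℝ := Pi.single i 1

/-- The functional `x ↦ x₁₂ + x₂₃ + 2x₂₄ + 2x₃₄`. -/
noncomputable def adjPenta : (Fin 6 → ℝ) →ₗ[ℝ] ℝ :=
  (LinearMap.proj 0 : (Fin 6 → ℝ) →ₗ[ℝ] ℝ) + LinearMap.proj 2 +
    (2 : ℝ) • (LinearMap.proj 4 : (Fin 6 → ℝ) →ₗ[ℝ] ℝ) +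
    (2 : ℝ) • (LinearMap.proj 5 : (Fin 6 → ℝ) →ₗ[ℝ] ℝ)

/-- `b` vanishes at the residual vertices `e₁₃, e₁₄` and at the five points where `{h = 0}` meets
the lines of `Gr(2,4)` spanned by pairs of the coordinate points `e₁₂, e₂₃, e₂₄, e₃₄`. -/
def IsAdjointForm (b : (Fin 6 → ℝ) →ₗ[ℝ] ℝ) : Prop :=
  b (e 1) = 0 ∧ b (e 3) = 0 ∧ b (e 0 - e 2) = 0 ∧
    b ((2 : ℝ) • e 0 - e 4) = 0 ∧ b ((2 : ℝ) • e 2 - e 4) = 0 ∧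
    b ((2 : ℝ) • e 2 - e 5) = 0 ∧ b (e 4 - e 5) = 0

lemma e_apply (i j : Fin 6) : e i j = if j = i then 1 else 0 := by
  simp [e, Pi.single_apply]

lemma adjPenta_apply (x : Fin 6 → ℝ) :
    adjPenta x = x 0 + x 2 + 2 * x 4 + 2 * x 5 := by
  simp [adjPenta, smul_eq_mul]

lemma adjPenta_e_zero : adjPenta (e 0) = 1 := by
  simp [adjPenta_apply, e_apply]

lemma isAdjointForm_adjPenta : IsAdjointForm adjPenta := by
  simp [IsAdjointForm, adjPenta_apply, e_apply]

lemma IsAdjointForm.smul {b : (Fin 6 → ℝ) →ₗ[ℝ] ℝ} (hb : IsAdjointForm b) (t : ℝ) :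
    IsAdjointForm (t • b) := by
  obtain ⟨h₁, h₂, h₃, h₄, h₅, h₆, h₇⟩ := hb
  simp only [IsAdjointForm, LinearMap.smul_apply, h₁, h₂, h₃, h₄, h₅, h₆, h₇, smul_zero,
    and_self]

/-- The conditions force `b(e₁₃) = b(e₁₄) = 0`, `b(e₂₃) = b(e₁₂)` and `b(e₂₄) = b(e₃₄) = 2 b(e₁₂)`. -/
lemma IsAdjointForm.eq_smul_adjPenta {b : (Fin 6 → ℝ) →ₗ[ℝ] ℝ} (hb : IsAdjointForm b) :
    b = b (e 0) • adjPenta := by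
  obtain ⟨h₁, h₃, h₀₂, h₀₄, h₂₄, h₂₅, h₄₅⟩ := hb
  simp only [map_sub, map_smul, smul_eq_mul] at h₀₂ h₀₄ h₂₄ h₂₅ h₄₅
  refine (Pi.basisFun ℝ (Fin 6)).ext fun i => ?_
  rw [Pi.basisFun_apply, LinearMap.smul_apply, smul_eq_mul]
  change b (e i) = b (e 0) * adjPenta (e i)
  fin_cases i <;> simp [adjPenta_apply, e_apply] <;> linarith

theorem stmt5 :
    adjPenta ≠ 0 ∧
    {b : (Fin 6 → ℝ) →ₗ[ℝ] ℝ |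
        b (e 1) = 0 ∧ b (e 3) = 0 ∧ b (e 0 - e 2) = 0 ∧
        b ((2 : ℝ) • e 0 - e 4) = 0 ∧ b ((2 : ℝ) • e 2 - e 4) = 0 ∧
        b ((2 : ℝ) • e 2 - e 5) = 0 ∧ b (e 4 - e 5) = 0} =
      {b | ∃ t : ℝ, b = t • adjPenta} := by
  refine ⟨fun h => by simpa [h] using adjPenta_e_zero, ?_⟩
  ext b
  refine ⟨fun hb => ⟨b (e 0), IsAdjointForm.eq_smul_adjPenta hb⟩, ?_⟩
  rintro ⟨t, rfl⟩
  exact isAdjointForm_adjPenta.smul t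
end
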